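/- arXiv:1809.02934 — 6 statements merged into one kernel-verified Lean document; each statement's English description precedes it below -/
import Mathlib

section
/- Derivative formula for the spectrum efficiency: for every real T > −(T_b + T_s) (in particular for all T ≥ 0), g is differentiable at T with derivative g′(T) = p_s · F(T) / (t_f · (T_b + T_s + T)²), where F(T) = p_f^{C·T/N} · (N − C·(T_b + T_s + T)·ln p_f) − N. -/
/-- Derivative formula for the spectrum efficiency: for every
real `T > −(T_b + T_s)`, `g` is differentiable at `T` with derivative
`g′(T) = p_s · F T / (t_f · (T_b + T_s + T)²)`, where
`F T = p_f^(C·T/N) · (N − C·(T_b + T_s + T)·ln p_f) − N`. -/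
theorem stmt2 (N C t_f T_b T_s p_s p_f : ℝ) (g F : ℝ → ℝ)
    (hN : 0 < N) (hC : 0 < C) (htf : 0 < t_f)
    (hTb : 0 ≤ T_b) (hTs : 0 ≤ T_s) (hTbs : 0 < T_b + T_s)
    (hps0 : 0 < p_s) (hps1 : p_s ≤ 1)
    (hpf0 : 0 < p_f) (hpf1 : p_f < 1)
    (hg : ∀ T : ℝ, g T = N * p_s * (1 - p_f ^ (C * T / N)) / (t_f * (T_b + T_s + T)))
    (hF : ∀ T : ℝ,
      F T = p_f ^ (C * T / N) * (N - C * (T_b + T_s + T) * Real.log p_f) - N) :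
    ∀ T : ℝ, -(T_b + T_s) < T →
      HasDerivAt g (p_s * F T / (t_f * (T_b + T_s + T) ^ 2)) T := by
  intro T hT
  have hden : T_b + T_s + T ≠ 0 := by linarith
  have hexp : HasDerivAt (fun x : ℝ => C * x / N) (C / N) T := by
    simpa using ((hasDerivAt_id T).const_mul C).div_const N
  have hpow : HasDerivAt (fun x : ℝ => p_f ^ (C * x / N))
      (p_f ^ (C * T / N) * Real.log p_f * (C / N)) T :=
    ((Real.hasStrictDerivAt_const_rpow hpf0 (C * T / N)).hasDerivAt.comp T hexp).congr_deriv (by ring)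
  have hnum : HasDerivAt (fun x : ℝ => N * p_s * (1 - p_f ^ (C * x / N)))
      (N * p_s * (-(p_f ^ (C * T / N) * Real.log p_f * (C / N)))) T :=
    (((hasDerivAt_const T (1:ℝ)).sub hpow)).const_mul (N * p_s) |>.congr_deriv (by ring)
  have hdenf : HasDerivAt (fun x : ℝ => t_f * (T_b + T_s + x)) t_f T := by
    simpa using ((hasDerivAt_const T (T_b + T_s)).add (hasDerivAt_id T)).const_mul t_f
  have hq := hnum.div hdenf (by positivity)
  have hfun : (fun x : ℝ => N * p_s * (1 - p_f ^ (C * x / N)) / (t_f * (T_b + T_s + x))) = g := by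
    funext x; rw [hg x]
  simp only [Pi.div_def] at hq
  rw [hfun] at hq
  refine hq.congr_deriv ?_
  rw [hF T]
  field_simp
  ring
end

section
/- The auxiliary function F is strictly decreasing on [0, ∞): for every T ≥ 0, F is differentiable at T with F′(T) = −(C² · (ln p_f)² / N) · p_f^{C·T/N} · (T_b + T_s + T), and F′(T) < 0; consequently F is strictly antitone on [0, ∞). -/
/-- `F` is strictly decreasing on `[0, ∞)`: for every `T ≥ 0`,
`F` is differentiable at `T` with
`F′(T) = −(C²·(ln p_f)²/N)·p_f^(C·T/N)·(T_b + T_s + T)` and `F′(T) < 0`;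
consequently `F` is strictly antitone on `[0, ∞)`. -/
theorem stmt3 (N C T_b T_s p_f : ℝ) (F : ℝ → ℝ)
    (hN : 0 < N) (hC : 0 < C)
    (hTb : 0 ≤ T_b) (hTs : 0 ≤ T_s) (hTbs : 0 < T_b + T_s)
    (hpf0 : 0 < p_f) (hpf1 : p_f < 1)
    (hF : ∀ T : ℝ,
      F T = p_f ^ (C * T / N) * (N - C * (T_b + T_s + T) * Real.log p_f) - N) :
    (∀ T : ℝ, 0 ≤ T →
      HasDerivAt F
        (-(C ^ 2 * (Real.log p_f) ^ 2 / N) * p_f ^ (C * T / N) * (T_b + T_s + T)) T ∧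
      -(C ^ 2 * (Real.log p_f) ^ 2 / N) * p_f ^ (C * T / N) * (T_b + T_s + T) < 0)
    ∧ StrictAntiOn F (Set.Ici 0) := by
  have hL : Real.log p_f < 0 := Real.log_neg hpf0 hpf1
  have key : ∀ T : ℝ, HasDerivAt F
      (-(C ^ 2 * (Real.log p_f) ^ 2 / N) * p_f ^ (C * T / N) * (T_b + T_s + T)) T := by
    intro T
    have h1 : HasDerivAt (fun t : ℝ => C * t / N) (C / N) T := by
      simpa using ((hasDerivAt_id T).const_mul C).div_const N
    have h2 : HasDerivAt (fun t : ℝ => p_f ^ (C * t / N))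
        (p_f ^ (C * T / N) * Real.log p_f * (C / N)) T := by
      have := (Real.hasStrictDerivAt_const_rpow hpf0 (C * T / N)).hasDerivAt.comp T h1
      simpa [mul_assoc, Function.comp_def] using this
    have h3 : HasDerivAt (fun t : ℝ => N - C * (T_b + T_s + t) * Real.log p_f)
        (-(C * Real.log p_f)) T := by
      have : HasDerivAt (fun t : ℝ => C * (T_b + T_s + t) * Real.log p_f)
          (C * Real.log p_f) T := by
        have := (((hasDerivAt_id T).const_add (T_b + T_s)).const_mul C).mul_const
          (Real.log p_f)
        simpa using this
      simpa [Pi.sub_def] using (hasDerivAt_const T N).sub this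
    have h4 := (h2.mul h3).sub_const N
    have heq : (fun t : ℝ =>
        p_f ^ (C * t / N) * (N - C * (T_b + T_s + t) * Real.log p_f) - N) = F := by
      funext t; rw [hF t]
    simp only [Pi.mul_apply] at h4
    rw [heq] at h4
    refine h4.congr_deriv ?_
    field_simp
    ring
  have hneg : ∀ T : ℝ, 0 < T_b + T_s + T →
      -(C ^ 2 * (Real.log p_f) ^ 2 / N) * p_f ^ (C * T / N) * (T_b + T_s + T) < 0 := by
    intro T hT
    have hL2 : 0 < (Real.log p_f) ^ 2 := pow_pos (neg_pos.mpr hL) 2 |> fun h => by nlinarith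
    have hrp : 0 < p_f ^ (C * T / N) := Real.rpow_pos_of_pos hpf0 _
    have : 0 < C ^ 2 * (Real.log p_f) ^ 2 / N := div_pos (mul_pos (pow_pos hC 2) hL2) hN
    nlinarith [mul_pos (mul_pos this hrp) hT]
  constructor
  · intro T hT
    exact ⟨key T, hneg T (by linarith)⟩
  · apply strictAntiOn_of_deriv_neg (convex_Ici 0)
    · exact fun x _ => (key x).differentiableAt.continuousAt.continuousWithinAt
    · intro x hx
      rw [interior_Ici] at hx
      rw [(key x).deriv]
      exact hneg x (by simp at hx; linarith)
end

section
/- Existence and uniqueness of the critical duration: there exists a unique real T* > 0 such that F(T*) = 0. -/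
open Real Filter

/-- Existence and uniqueness of the critical duration: there
exists a unique real `T* > 0` such that `F T* = 0`. -/
theorem stmt6 (N C T_b T_s p_f : ℝ) (F : ℝ → ℝ)
    (hN : 0 < N) (hC : 0 < C)
    (hTb : 0 ≤ T_b) (hTs : 0 ≤ T_s) (hTbs : 0 < T_b + T_s)
    (hpf0 : 0 < p_f) (hpf1 : p_f < 1)
    (hF : ∀ T : ℝ,
      F T = p_f ^ (C * T / N) * (N - C * (T_b + T_s + T) * Real.log p_f) - N) :
    ∃! Tstar : ℝ, 0 < Tstar ∧ F Tstar = 0 := by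
  set L := Real.log p_f with hLdef
  have hL : L < 0 := Real.log_neg hpf0 hpf1
  set a : ℝ := C * L / N with hadef
  have ha : a < 0 := div_neg_of_neg_of_pos (mul_neg_of_pos_of_neg hC hL) hN
  set g : ℝ → ℝ := fun T => Real.exp (a * T) * (N - C * (T_b + T_s + T) * L) - N
    with hgdef
  have hFg : ∀ T, F T = g T := by
    intro T
    rw [hF T, Real.rpow_def_of_pos hpf0]
    simp only [hgdef]
    rw [hadef, hLdef]; ring_nf
  clear_value g a L
  clear hLdef
  have haN : a * N = C * L := by rw [hadef]; field_simp
  -- derivative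
  have hderiv : ∀ T : ℝ, HasDerivAt g
      (Real.exp (a * T) * a * (N - C * (T_b + T_s + T) * L)
        + Real.exp (a * T) * -(C * L)) T := by
    intro T
    rw [hgdef]
    have h1 : HasDerivAt (fun T : ℝ => Real.exp (a * T)) (Real.exp (a * T) * a) T := by
      simpa using ((hasDerivAt_id T).const_mul a).exp
    have h2 : HasDerivAt (fun T : ℝ => N - C * (T_b + T_s + T) * L) (-(C * L)) T := by
      have := (((hasDerivAt_id T).const_add (T_b + T_s)).const_mul C).mul_const L
      exact ((hasDerivAt_const T N).sub this).congr_deriv (by ring)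
    simpa using (h1.mul h2).sub_const N
  have hderiv_neg : ∀ T : ℝ, 0 ≤ T →
      Real.exp (a * T) * a * (N - C * (T_b + T_s + T) * L)
        + Real.exp (a * T) * -(C * L) < 0 := by
    intro T hT
    have hkey : Real.exp (a * T) * a * (N - C * (T_b + T_s + T) * L)
        + Real.exp (a * T) * -(C * L)
        = -(Real.exp (a * T) * (C ^ 2 * L ^ 2 * (T_b + T_s + T) / N)) := by
      rw [hadef]; field_simp; ring
    have hpos : 0 < T_b + T_s + T := by linarith
    have hLne : L ≠ 0 := ne_of_lt hL
    have : 0 < Real.exp (a * T) * (C ^ 2 * L ^ 2 * (T_b + T_s + T) / N) := by positivity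
    rw [hkey]; linarith
  have hanti : StrictAntiOn g (Set.Ici 0) := by
    apply strictAntiOn_of_deriv_neg (convex_Ici 0)
    · rw [hgdef]
      exact (((Real.continuous_exp.comp (continuous_const.mul continuous_id)).mul
        (by continuity)).sub continuous_const).continuousOn
    · intro T hT
      rw [interior_Ici] at hT
      rw [(hderiv T).deriv]
      exact hderiv_neg T (le_of_lt hT)
  -- g 0 > 0
  have hg0 : 0 < g 0 := by
    rw [hgdef]
    simp only [mul_zero, Real.exp_zero, one_mul, add_zero]
    nlinarith [mul_pos hC hTbs]
  -- tendsto
  have hna : 0 < -a := neg_pos.mpr ha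
  have hcomp : Tendsto (fun T : ℝ => -a * T) atTop atTop := tendsto_id.const_mul_atTop hna
  have ht1 : Tendsto (fun T : ℝ => Real.exp (a * T)) atTop (nhds 0) := by
    refine ((tendsto_pow_mul_exp_neg_atTop_nhds_zero 0).comp hcomp).congr fun x => ?_
    simp [neg_mul, neg_neg]
  have ht2 : Tendsto (fun T : ℝ => T * Real.exp (a * T)) atTop (nhds 0) := by
    have h := ((tendsto_pow_mul_exp_neg_atTop_nhds_zero 1).comp hcomp).const_mul ((-a)⁻¹)
    rw [mul_zero] at h
    refine h.congr fun x => ?_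
    have hne : (-a) ≠ 0 := ne_of_gt hna
    have hane : a ≠ 0 := ne_of_lt ha
    simp only [Function.comp_apply, pow_one, neg_mul, neg_neg]
    field_simp
  have htend : Tendsto g atTop (nhds (-N)) := by
    have h : Tendsto (fun T : ℝ =>
        (N - C * (T_b + T_s) * L) * Real.exp (a * T)
          + (-(C * L)) * (T * Real.exp (a * T)) - N) atTop
        (nhds ((N - C * (T_b + T_s) * L) * 0 + (-(C * L)) * 0 - N)) :=
      ((ht1.const_mul _).add (ht2.const_mul _)).sub_const N
    simp only [mul_zero, add_zero, zero_sub] at h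
    refine h.congr fun T => ?_
    rw [hgdef]
    ring
  obtain ⟨M, hM1, hgM⟩ : ∃ M : ℝ, 1 ≤ M ∧ g M < 0 := by
    have := (htend.eventually_lt_const (by linarith : -N < 0)).and (eventually_ge_atTop 1)
    obtain ⟨M, h1, h2⟩ := this.exists
    exact ⟨M, h2, h1⟩
  -- existence via IVT
  have hcont : ContinuousOn g (Set.Icc 0 M) := by
    rw [hgdef]
    exact (((Real.continuous_exp.comp (continuous_const.mul continuous_id)).mul
      (by continuity)).sub continuous_const).continuousOn
  have hivt := intermediate_value_Icc' (by linarith : (0:ℝ) ≤ M) hcont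
  have h0mem : (0:ℝ) ∈ Set.Icc (g M) (g 0) := ⟨le_of_lt hgM, le_of_lt hg0⟩
  obtain ⟨c, hcmem, hgc⟩ := hivt h0mem
  have hc0 : 0 < c := by
    rcases lt_or_eq_of_le hcmem.1 with h | h
    · exact h
    · exfalso; rw [← h] at hgc; exact (ne_of_gt hg0) hgc
  refine ⟨c, ⟨hc0, by rw [hFg]; exact hgc⟩, ?_⟩
  rintro y ⟨hy0, hyF⟩
  have hyg : g y = 0 := by rw [← hFg]; exact hyF
  exact hanti.injOn (Set.mem_Ici.mpr (le_of_lt hy0)) (Set.mem_Ici.mpr (le_of_lt hc0))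
    (by rw [hyg, hgc])
end

section
/- Unimodality of the spectrum efficiency (Proposition 1, monotonicity part): if T* > 0 satisfies F(T*) = 0, then g is strictly increasing on the interval [0, T*] and strictly decreasing on the interval [T*, ∞); in particular T* is the unique global maximizer of g on [0, ∞), i.e., g(T) < g(T*) for every T ≥ 0 with T ≠ T*. -/
/-- Unimodality of the spectrum efficiency: if `T* > 0` satisfies
`F T* = 0`, then `g` is strictly increasing on `[0, T*]` and strictly
decreasing on `[T*, ∞)`; in particular `T*` is the unique global maximizer of
`g` on `[0, ∞)`. -/
theorem stmt7 (N C t_f T_b T_s p_s p_f : ℝ) (g F : ℝ → ℝ) (Tstar : ℝ)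
    (hN : 0 < N) (hC : 0 < C) (htf : 0 < t_f)
    (hTb : 0 ≤ T_b) (hTs : 0 ≤ T_s) (hTbs : 0 < T_b + T_s)
    (hps0 : 0 < p_s) (hps1 : p_s ≤ 1)
    (hpf0 : 0 < p_f) (hpf1 : p_f < 1)
    (hg : ∀ T : ℝ, g T = N * p_s * (1 - p_f ^ (C * T / N)) / (t_f * (T_b + T_s + T)))
    (hF : ∀ T : ℝ,
      F T = p_f ^ (C * T / N) * (N - C * (T_b + T_s + T) * Real.log p_f) - N)
    (hTstar : 0 < Tstar) (hFTstar : F Tstar = 0) :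
    StrictMonoOn g (Set.Icc 0 Tstar) ∧ StrictAntiOn g (Set.Ici Tstar) ∧
      ∀ T : ℝ, 0 ≤ T → T ≠ Tstar → g T < g Tstar := by
  have hlpf : Real.log p_f < 0 := Real.log_neg hpf0 hpf1
  set a := T_b + T_s with ha
  set k := C / N * Real.log p_f with hk
  have hkneg : k < 0 := mul_neg_of_pos_of_neg (div_pos hC hN) hlpf
  have hrw : ∀ T : ℝ, p_f ^ (C * T / N) = Real.exp (k * T) := by
    intro T
    rw [Real.rpow_def_of_pos hpf0]
    congr 1
    rw [hk]; field_simp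
  have hgeq : ∀ T : ℝ, g T = N * p_s * (1 - Real.exp (k * T)) / (t_f * (a + T)) := by
    intro T; rw [hg, hrw]
  have hFeq : ∀ T : ℝ, F T = N * (Real.exp (k * T) * (1 - k * (a + T)) - 1) := by
    intro T
    rw [hF, hrw]
    have hN' : (N : ℝ) ≠ 0 := ne_of_gt hN
    rw [hk]; field_simp
  -- derivative of F
  have hexp : ∀ T : ℝ, HasDerivAt (fun T => Real.exp (k * T)) (Real.exp (k * T) * (k * 1)) T := by
    intro T
    exact ((hasDerivAt_id T).const_mul k).exp
  have hF' : ∀ T : ℝ, HasDerivAt F (-(N * k ^ 2 * (a + T) * Real.exp (k * T))) T := by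
    intro T
    have h2 : HasDerivAt (fun T : ℝ => 1 - k * (a + T)) (-k) T := by
      have : HasDerivAt (fun T : ℝ => k * (a + T)) (k * 1) T :=
        ((hasDerivAt_id T).const_add a).const_mul k
      simpa using (this.const_sub 1)
    have h3 := ((hexp T).mul h2).const_mul N
    have h4 := h3.sub_const N
    simp only [Pi.mul_apply] at h4
    have heq : (fun T => N * (Real.exp (k * T) * (1 - k * (a + T)) - 1)) = F := by
      funext x; rw [hFeq x]
    rw [show (fun T => N * (Real.exp (k * T) * (1 - k * (a + T))) - N)
        = (fun T => N * (Real.exp (k * T) * (1 - k * (a + T)) - 1)) from by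
        funext x; ring, heq] at h4
    refine h4.congr_deriv ?_
    ring
  -- derivative of g for T with a + T > 0
  have hg' : ∀ T : ℝ, 0 < a + T →
      HasDerivAt g (p_s * t_f * F T / (t_f * (a + T)) ^ 2) T := by
    intro T hT
    have hu : HasDerivAt (fun T : ℝ => N * p_s * (1 - Real.exp (k * T)))
        (N * p_s * (0 - Real.exp (k * T) * (k * 1))) T := by
      have := ((hasDerivAt_const T (1 : ℝ)).sub (hexp T)).const_mul (N * p_s)
      simpa using this
    have hv : HasDerivAt (fun T : ℝ => t_f * (a + T)) (t_f * 1) T :=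
      ((hasDerivAt_id T).const_add a).const_mul t_f
    have hvne : t_f * (a + T) ≠ 0 := ne_of_gt (mul_pos htf hT)
    have hd := hu.div hv hvne
    have heq : (fun T => N * p_s * (1 - Real.exp (k * T)) / (t_f * (a + T))) = g := by
      funext x; rw [hgeq x]
    simp only [Pi.div_def] at hd
    rw [heq] at hd
    refine hd.congr_deriv ?_
    rw [hFeq]
    field_simp
    ring
  have hgcont : ∀ T : ℝ, 0 < a + T → ContinuousAt g T := fun T hT => (hg' T hT).continuousAt
  have haT : ∀ T : ℝ, 0 ≤ T → 0 < a + T := fun T hT => by simp only [ha]; linarith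
  -- F is strictly decreasing on [0, ∞)
  have hFanti : StrictAntiOn F (Set.Ici (0 : ℝ)) := by
    apply strictAntiOn_of_deriv_neg (convex_Ici 0)
      (fun x _ => (hF' x).continuousAt.continuousWithinAt)
    intro x hx
    rw [interior_Ici] at hx
    rw [(hF' x).deriv]
    have h1 : 0 < a + x := by simp only [Set.mem_Ioi] at hx; simp only [ha]; linarith
    have h2 : 0 < k ^ 2 := by nlinarith
    nlinarith [Real.exp_pos (k * x), mul_pos (mul_pos (mul_pos hN h2) h1) (Real.exp_pos (k * x))]
  have hFpos : ∀ T : ℝ, 0 ≤ T → T < Tstar → 0 < F T := by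
    intro T hT hTlt
    have h := hFanti (Set.mem_Ici.mpr hT) (Set.mem_Ici.mpr (le_of_lt hTstar)) hTlt
    rw [hFTstar] at h
    exact h
  have hFneg : ∀ T : ℝ, Tstar < T → F T < 0 := by
    intro T hTlt
    have h := hFanti (Set.mem_Ici.mpr (le_of_lt hTstar)) (Set.mem_Ici.mpr (le_of_lt (hTstar.trans hTlt))) hTlt
    rw [hFTstar] at h
    exact h
  -- strict mono on [0, Tstar]
  have hmono : StrictMonoOn g (Set.Icc 0 Tstar) := by
    apply strictMonoOn_of_deriv_pos (convex_Icc 0 Tstar)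
    · intro x hx
      exact (hgcont x (haT x hx.1)).continuousWithinAt
    · intro x hx
      rw [interior_Icc] at hx
      have hax : 0 < a + x := haT x (le_of_lt hx.1)
      rw [(hg' x hax).deriv]
      have hFx : 0 < F x := hFpos x (le_of_lt hx.1) hx.2
      have h2 : 0 < (t_f * (a + x)) ^ 2 := by positivity
      exact div_pos (mul_pos (mul_pos hps0 htf) hFx) h2
  have hanti : StrictAntiOn g (Set.Ici Tstar) := by
    apply strictAntiOn_of_deriv_neg (convex_Ici Tstar)
    · intro x hx
      exact (hgcont x (haT x (le_trans (le_of_lt hTstar) hx))).continuousWithinAt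
    · intro x hx
      rw [interior_Ici] at hx
      have hax : 0 < a + x := haT x (le_of_lt (hTstar.trans hx))
      rw [(hg' x hax).deriv]
      have hFx : F x < 0 := hFneg x hx
      have h2 : 0 < (t_f * (a + x)) ^ 2 := by positivity
      have h3 : p_s * t_f * F x < 0 := mul_neg_of_pos_of_neg (mul_pos hps0 htf) hFx
      exact div_neg_of_neg_of_pos h3 h2
  refine ⟨hmono, hanti, ?_⟩
  intro T hT hne
  rcases lt_or_gt_of_ne hne with h | h
  · exact hmono (Set.mem_Icc.mpr ⟨hT, le_of_lt h⟩)
      (Set.mem_Icc.mpr ⟨le_of_lt hTstar, le_refl _⟩) h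
  · exact hanti (Set.mem_Ici.mpr (le_refl _)) (Set.mem_Ici.mpr (le_of_lt h)) h
end

section
/- Lambert-form characterization of the critical point: for every real T ≥ 0, setting w = (C·ln p_f / N)·(T_b + T_s + T) − 1, one has w < −1, and F(T) = 0 if and only if w·e^{w} = −(1/e)·p_f^{C·(T_b + T_s)/N}. -/
/-- Lambert-form characterization of the critical point: for
every real `T ≥ 0`, setting `w = (C·ln p_f / N)·(T_b + T_s + T) − 1`, one has
`w < −1`, and `F T = 0 ↔ w·e^w = −(1/e)·p_f^(C·(T_b + T_s)/N)`. -/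
theorem stmt8 (N C T_b T_s p_f : ℝ) (F : ℝ → ℝ)
    (hN : 0 < N) (hC : 0 < C)
    (hTb : 0 ≤ T_b) (hTs : 0 ≤ T_s) (hTbs : 0 < T_b + T_s)
    (hpf0 : 0 < p_f) (hpf1 : p_f < 1)
    (hF : ∀ T : ℝ,
      F T = p_f ^ (C * T / N) * (N - C * (T_b + T_s + T) * Real.log p_f) - N) :
    ∀ T : ℝ, 0 ≤ T →
      (C * Real.log p_f / N) * (T_b + T_s + T) - 1 < -1 ∧
      (F T = 0 ↔
        ((C * Real.log p_f / N) * (T_b + T_s + T) - 1) *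
            Real.exp ((C * Real.log p_f / N) * (T_b + T_s + T) - 1)
          = -(1 / Real.exp 1) * p_f ^ (C * (T_b + T_s) / N)) := by
  intro T hT
  have hL : Real.log p_f < 0 := Real.log_neg hpf0 hpf1
  set a : ℝ := C * Real.log p_f / N with ha_def
  have ha : a < 0 := div_neg_of_neg_of_pos (mul_neg_of_pos_of_neg hC hL) hN
  set s : ℝ := T_b + T_s + T with hs_def
  have hs : 0 < s := by rw [hs_def]; linarith
  have hw : a * s - 1 < -1 := by nlinarith [mul_neg_of_neg_of_pos ha hs]
  refine ⟨hw, ?_⟩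
  rw [hF]
  have hE : ∀ x : ℝ, p_f ^ x = Real.exp (x * Real.log p_f) := fun x => by
    rw [Real.rpow_def_of_pos hpf0, mul_comm]
  rw [hE, hE]
  have hNne : N ≠ 0 := ne_of_gt hN
  have h1 : C * T / N * Real.log p_f = a * T := by
    rw [ha_def]; field_simp
  have h2 : C * (T_b + T_s) / N * Real.log p_f = a * (T_b + T_s) := by
    rw [ha_def]; field_simp
  have h3 : C * s * Real.log p_f = N * (a * s) := by
    rw [ha_def]; field_simp
  rw [h1, h2, h3]
  have hsum : a * s - 1 = a * (T_b + T_s) + a * T - 1 := by rw [hs_def]; ring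
  set E1 := Real.exp (a * T) with hE1
  set E2 := Real.exp (a * (T_b + T_s)) with hE2
  have hsplit : Real.exp (a * s - 1) = E2 * E1 / Real.exp 1 := by
    rw [hsum, Real.exp_sub, Real.exp_add]
  rw [hsplit]
  have hE1p : 0 < E1 := Real.exp_pos _
  have hE2p : 0 < E2 := Real.exp_pos _
  have hep : 0 < Real.exp 1 := Real.exp_pos 1
  have key : ((a * s - 1) * (E2 * E1 / Real.exp 1) = -(1 / Real.exp 1) * E2)
      ↔ ((a * s - 1) * E1 = -1) := by
    rw [show (a * s - 1) * (E2 * E1 / Real.exp 1)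
          = ((a * s - 1) * E1) * E2 / Real.exp 1 by ring,
        show -(1 / Real.exp 1) * E2 = (-1) * E2 / Real.exp 1 by ring,
        div_left_inj' (ne_of_gt hep), mul_left_inj' (ne_of_gt hE2p)]
  rw [key]
  constructor
  · intro h
    nlinarith
  · intro h
    nlinarith
end

section
/- Proposition 1 (optimal duration of transmission phase, closed form): let w* be the unique real number with w* ≤ −1 and w*·e^{w*} = −(1/e)·p_f^{C·(T_b + T_s)/N}, and set T* = (N/(C·ln p_f))·(1 + w*) − T_b − T_s. Then T* > 0, F(T*) = 0, and T* is the unique global maximizer of g on [0, ∞): g(T) < g(T*) for every T ≥ 0 with T ≠ T*. -/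
/-- Proposition 1, closed form: let `w*` be the unique real
number with `w* ≤ −1` and `w*·e^{w*} = −(1/e)·p_f^(C·(T_b+T_s)/N)`, and set
`T* = (N/(C·ln p_f))·(1 + w*) − T_b − T_s`. Then `T* > 0`, `F T* = 0`, and
`T*` is the unique global maximizer of `g` on `[0, ∞)`. -/
theorem stmt11 (N C t_f T_b T_s p_s p_f : ℝ) (g F : ℝ → ℝ) (wstar Tstar : ℝ)
    (hN : 0 < N) (hC : 0 < C) (htf : 0 < t_f)
    (hTb : 0 ≤ T_b) (hTs : 0 ≤ T_s) (hTbs : 0 < T_b + T_s)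
    (hps0 : 0 < p_s) (hps1 : p_s ≤ 1)
    (hpf0 : 0 < p_f) (hpf1 : p_f < 1)
    (hg : ∀ T : ℝ, g T = N * p_s * (1 - p_f ^ (C * T / N)) / (t_f * (T_b + T_s + T)))
    (hF : ∀ T : ℝ,
      F T = p_f ^ (C * T / N) * (N - C * (T_b + T_s + T) * Real.log p_f) - N)
    (hw1 : wstar ≤ -1)
    (hw2 : wstar * Real.exp wstar = -(1 / Real.exp 1) * p_f ^ (C * (T_b + T_s) / N))
    (hTstar : Tstar = N / (C * Real.log p_f) * (1 + wstar) - T_b - T_s) :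
    0 < Tstar ∧ F Tstar = 0 ∧
      ∀ T : ℝ, 0 ≤ T → T ≠ Tstar → g T < g Tstar := by
  set L := Real.log p_f with hL
  have hLneg : L < 0 := Real.log_neg hpf0 hpf1
  have hNne : N ≠ 0 := ne_of_gt hN
  have hCLne : C * L ≠ 0 := mul_ne_zero (ne_of_gt hC) (ne_of_lt hLneg)
  set a := C * L / N with ha
  have haneg : a < 0 := div_neg_of_neg_of_pos (mul_neg_of_pos_of_neg hC hLneg) hN
  set B := T_b + T_s with hB
  clear_value L a B
  have hrpow : ∀ T : ℝ, p_f ^ (C * T / N) = Real.exp (a * T) := by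
    intro T
    rw [Real.rpow_def_of_pos hpf0]
    rw [ha, ← hL]
    field_simp
  -- wstar < -1 strictly
  have hwlt : wstar < -1 := by
    rcases lt_or_eq_of_le hw1 with h | h
    · exact h
    · exfalso
      rw [h, hrpow] at hw2
      have he1 : Real.exp (-1 : ℝ) = 1 / Real.exp 1 := by
        rw [Real.exp_neg]; ring
      have : Real.exp (a * B) = 1 := by
        have := hw2
        rw [he1] at this
        have hpos : (0:ℝ) < 1 / Real.exp 1 := by positivity
        nlinarith
      have haB : a * B < 0 := mul_neg_of_neg_of_pos haneg hTbs
      have h5 : Real.exp (a * B) < 1 := by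
        calc Real.exp (a * B) < Real.exp 0 := Real.exp_lt_exp.mpr haB
        _ = 1 := Real.exp_zero
      linarith
  have hwneg : 1 + wstar < 0 := by linarith
  -- B + Tstar = (1 + wstar) / a
  have hBT : B + Tstar = (1 + wstar) / a := by
    rw [hB, hTstar, ha]
    field_simp
    ring
  have hBTpos : 0 < B + Tstar := by
    rw [hBT]
    exact div_pos_of_neg_of_neg hwneg haneg
  have haBT : a * (B + Tstar) = 1 + wstar := by
    rw [hBT]
    exact mul_div_cancel₀ _ (ne_of_lt haneg)
  -- a * Tstar = 1 + wstar - a * B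
  have haT : a * Tstar = 1 + wstar - a * B := by
    have : a * Tstar = a * (B + Tstar) - a * B := by ring
    rw [this, haBT]
  -- key identity
  have hkey : Real.exp (a * Tstar) * (-wstar) = 1 := by
    have h2 : p_f ^ (C * B / N) = Real.exp (a * B) := hrpow B
    rw [haT, show (1 + wstar - a * B) = wstar + (1 - a * B) by ring,
      Real.exp_add]
    have : Real.exp wstar * (-wstar) = (1 / Real.exp 1) * Real.exp (a * B) := by
      rw [h2] at hw2; nlinarith
    rw [show Real.exp wstar * Real.exp (1 - a * B) * -wstar
        = (Real.exp wstar * (-wstar)) * Real.exp (1 - a * B) by ring, this]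
    rw [show (1 - a * B) = 1 + (-(a*B)) by ring, Real.exp_add, Real.exp_neg]
    have h3 : Real.exp (a*B) ≠ 0 := ne_of_gt (Real.exp_pos _)
    have h4 : Real.exp (1:ℝ) ≠ 0 := ne_of_gt (Real.exp_pos _)
    field_simp
  have hkey' : Real.exp (a * Tstar) * (1 - a * (B + Tstar)) = 1 := by
    rw [haBT, show (1 - (1 + wstar)) = -wstar by ring]
    exact hkey
  -- Tstar > 0
  have hTpos : 0 < Tstar := by
    by_contra hcon
    push_neg at hcon
    have h1 : 0 ≤ a * Tstar := by nlinarith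
    have h2 : 1 ≤ Real.exp (a * Tstar) := Real.one_le_exp h1
    have h3 : 1 < -wstar := by linarith
    nlinarith
  refine ⟨hTpos, ?_, ?_⟩
  · -- F Tstar = 0
    rw [hF, hrpow]
    have : N - C * (B + Tstar) * L = N * (1 - a * (B + Tstar)) := by
      rw [ha]; field_simp
    rw [this]
    linear_combination N * hkey'
  · intro T hT hne
    have hBTp : 0 < B + T := by linarith
    have hexpTs := Real.exp_pos (a * Tstar)
    -- g Tstar value
    have hgs : g Tstar = N * p_s * (-a * Real.exp (a * Tstar)) / t_f := by
      rw [hg, hrpow]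
      have h1 : 1 - Real.exp (a * Tstar) = -a * (B + Tstar) * Real.exp (a * Tstar) := by
        linear_combination -hkey'
      rw [h1]
      rw [div_eq_div_iff (by positivity) (ne_of_gt htf)]
      ring
    -- main inequality
    have hdne : a * (T - Tstar) ≠ 0 := by
      intro h
      rcases mul_eq_zero.mp h with h | h
      · exact absurd h (ne_of_lt haneg)
      · exact hne (by linarith [sub_eq_zero.mp h] )
    have hexp1 : a * (T - Tstar) + 1 < Real.exp (a * (T - Tstar)) :=
      Real.add_one_lt_exp hdne
    have hexpsplit : Real.exp (a * T) = Real.exp (a * Tstar) * Real.exp (a * (T - Tstar)) := by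
      rw [← Real.exp_add]; congr 1; ring
    have hmul : Real.exp (a * Tstar) * (a * (T - Tstar) + 1)
        < Real.exp (a * Tstar) * Real.exp (a * (T - Tstar)) :=
      mul_lt_mul_of_pos_left hexp1 hexpTs
    have hineq : 1 - Real.exp (a * T) < -a * Real.exp (a * Tstar) * (B + T) := by
      calc 1 - Real.exp (a * T)
          = 1 - Real.exp (a * Tstar) * Real.exp (a * (T - Tstar)) := by rw [hexpsplit]
        _ < 1 - Real.exp (a * Tstar) * (a * (T - Tstar) + 1) := by linarith
        _ = -a * Real.exp (a * Tstar) * (B + T) := by linear_combination -hkey'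
    rw [hg, hgs, hrpow,
      div_lt_div_iff₀ (by positivity) htf]
    have hNp : 0 < N * p_s := mul_pos hN hps0
    have h6 : N * p_s * (1 - Real.exp (a * T))
        < N * p_s * (-a * Real.exp (a * Tstar) * (B + T)) :=
      mul_lt_mul_of_pos_left hineq hNp
    have h7 := mul_lt_mul_of_pos_left h6 htf
    linarith
end
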